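/- arXiv:1510.00731 — 2 statements merged into one kernel-verified Lean document; each statement's English description precedes it below -/
import Mathlib

section
/- For all integers p ≥ 0 and n ≥ 1, ∑_{k=1}^{n} C(k+p, p) · H_k = C(n+p+1, p+1) · H_n − (1/(p+1)!) · ∑_{t=0}^{p} s(p+1, t+1) · S_t(n), where H_k is the k-th harmonic number. -/
/-!
The Stirling numbers of the first kind are the coefficients of the rising factorial
`x (x + 1) ⋯ (x + p)`, so after exchanging the two sums the Stirling term becomes
`(1 / (p + 1)!) ∑ⱼ (j + 1) ⋯ (j + p) = (1 / (p + 1)) ∑ⱼ C(j + p, p)`. The resulting identity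
`∑ₖ C(k + p, p) Hₖ = C(n + p + 1, p + 1) Hₙ - (1 / (p + 1)) ∑ₖ C(k + p, p)` follows by induction on
`n` from Pascal's rule and `(p + 1) C(m, p + 1) = (m - p) C(m, p)`.
-/

def stirling : ℕ → ℕ → ℕ
  | 0, 0 => 1
  | 0, _ + 1 => 0
  | _ + 1, 0 => 0
  | n + 1, k + 1 => n * stirling n (k + 1) + stirling n k

open Finset Nat Polynomial

theorem stirling_eq_stirlingFirst : stirling = stirlingFirst := by
  funext m k
  induction m generalizing k with
  | zero => cases k <;> rfl
  | succ m ih => cases k <;> simp [stirling, stirlingFirst_succ_succ, ih]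

theorem sum_stirlingFirst_succ_succ_mul_pow {R : Type*} [CommSemiring R] (m : ℕ) (x : R) :
    ∑ t ∈ range (m + 1), (stirlingFirst (m + 1) (t + 1) : R) * x ^ t =
      (ascPochhammer R m).eval (x + 1) := by
  induction m with
  | zero => simp [stirlingFirst_self]
  | succ m ih =>
    have h_top : ∑ t ∈ range (m + 2), (stirlingFirst (m + 1) (t + 1) : R) * x ^ t =
        ∑ t ∈ range (m + 1), (stirlingFirst (m + 1) (t + 1) : R) * x ^ t := by
      rw [sum_range_succ, stirlingFirst_eq_zero_of_lt (by omega), cast_zero, zero_mul, add_zero]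
    have h_shift : ∑ t ∈ range (m + 2), (stirlingFirst (m + 1) t : R) * x ^ t =
        x * ∑ t ∈ range (m + 1), (stirlingFirst (m + 1) (t + 1) : R) * x ^ t := by
      rw [sum_range_succ', stirlingFirst_succ_zero, mul_sum]
      simp only [cast_zero, zero_mul, add_zero, pow_succ]
      exact sum_congr rfl fun t _ => by ring
    calc ∑ t ∈ range (m + 2), (stirlingFirst (m + 2) (t + 1) : R) * x ^ t
        = (m + 1) * ∑ t ∈ range (m + 2), (stirlingFirst (m + 1) (t + 1) : R) * x ^ t +
            ∑ t ∈ range (m + 2), (stirlingFirst (m + 1) t : R) * x ^ t := by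
          rw [mul_sum, ← sum_add_distrib]
          refine sum_congr rfl fun t _ => ?_
          rw [stirlingFirst_succ_succ]
          push_cast
          ring
      _ = (ascPochhammer R (m + 1)).eval (x + 1) := by
          rw [h_top, h_shift, ih, ascPochhammer_succ_eval]
          ring

theorem sum_stirling_succ_succ_mul_natCast_pow {R : Type*} [CommSemiring R] (p j : ℕ) :
    ∑ t ∈ range (p + 1), (stirling (p + 1) (t + 1) : R) * (j : R) ^ t =
      p ! * (j + p).choose p := by
  rw [stirling_eq_stirlingFirst, sum_stirlingFirst_succ_succ_mul_pow,
    ← cast_succ, ascPochhammer_nat_eq_natCast_ascFactorial, ascFactorial_eq_factorial_mul_choose,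
    cast_mul]

theorem sum_choose_mul_harmonic (p n : ℕ) :
    ∑ k ∈ Icc 1 n, ((k + p).choose p : ℚ) * harmonic k =
      ((n + p + 1).choose (p + 1) : ℚ) * harmonic n -
        (∑ k ∈ Icc 1 n, ((k + p).choose p : ℚ)) / (p + 1) := by
  induction n with
  | zero => simp
  | succ n ih =>
    have h_pascal := choose_succ_succ' (n + p + 1) p
    have h_absorb := choose_succ_right_eq (n + p + 1) p
    rw [show n + p + 1 - p = n + 1 by omega] at h_absorb
    rw [sum_Icc_succ_top (by omega), sum_Icc_succ_top (by omega), ih, harmonic_succ,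
      show n + 1 + p = n + p + 1 by omega, h_pascal]
    qify at h_absorb
    push_cast
    field_simp
    linear_combination -h_absorb

theorem stmt_5_general (p n : ℕ) :
    ∑ k ∈ Finset.Icc 1 n, ((k + p).choose p : ℚ) * harmonic k =
      ((n + p + 1).choose (p + 1) : ℚ) * harmonic n -
        (1 / (Nat.factorial (p + 1) : ℚ)) *
          ∑ t ∈ Finset.range (p + 1),
            (stirling (p + 1) (t + 1) : ℚ) * ∑ j ∈ Finset.Icc 1 n, (j : ℚ) ^ t := by
  have h_swap : ∑ t ∈ range (p + 1),
      (stirling (p + 1) (t + 1) : ℚ) * ∑ j ∈ Icc 1 n, (j : ℚ) ^ t =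
        p ! * ∑ j ∈ Icc 1 n, ((j + p).choose p : ℚ) := by
    simp_rw [mul_sum]
    rw [sum_comm]
    exact sum_congr rfl fun j _ => sum_stirling_succ_succ_mul_natCast_pow p j
  rw [h_swap, sum_choose_mul_harmonic, factorial_succ, cast_mul]
  field_simp
  push_cast
  ring

theorem stmt_5 (p n : ℕ) (hn : 1 ≤ n) :
    ∑ k ∈ Finset.Icc 1 n, ((k + p).choose p : ℚ) * harmonic k =
      ((n + p + 1).choose (p + 1) : ℚ) * harmonic n -
        (1 / (Nat.factorial (p + 1) : ℚ)) *
          ∑ t ∈ Finset.range (p + 1),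
            (stirling (p + 1) (t + 1) : ℚ) * ∑ j ∈ Finset.Icc 1 n, (j : ℚ) ^ t :=
  stmt_5_general p n
end

section
/- For every integer p ≥ 1, the p-th Catalan number satisfies C_p = (∑_{t=1}^{p+1} p^{t-1} · s(p+1, t)) / (∑_{t=1}^{p+1} s(p+1, t)), i.e., C_p is the average of p^{t-1} over all (p+1)! permutations of p+1 elements, where t is the number of cycles. -/
open Finset
open scoped Nat

theorem stirling_eq_stirlingFirst_s14 : ∀ n k : ℕ, stirling n k = Nat.stirlingFirst n k
  | 0, 0 | 0, _ + 1 | _ + 1, 0 => rfl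
  | n + 1, k + 1 => by
    rw [stirling, Nat.stirlingFirst_succ_succ, stirling_eq_stirlingFirst_s14 n (k + 1),
      stirling_eq_stirlingFirst_s14 n k]

namespace Nat

theorem sum_stirlingFirst_succ_succ_mul_pow (m x : ℕ) :
    ∑ t ∈ range (m + 1), stirlingFirst (m + 1) (t + 1) * x ^ t = (x + 1).ascFactorial m := by
  induction m with
  | zero => simp [stirlingFirst_self]
  | succ m ih =>
    have hsplit : ∑ t ∈ range (m + 2), stirlingFirst (m + 2) (t + 1) * x ^ t =
        (m + 1) * ∑ t ∈ range (m + 2), stirlingFirst (m + 1) (t + 1) * x ^ t +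
          ∑ t ∈ range (m + 2), stirlingFirst (m + 1) t * x ^ t := by
      simp only [stirlingFirst_succ_succ, mul_sum, ← sum_add_distrib]
      exact sum_congr rfl fun t _ => by ring
    have hleft : ∑ t ∈ range (m + 2), stirlingFirst (m + 1) (t + 1) * x ^ t =
        ∑ t ∈ range (m + 1), stirlingFirst (m + 1) (t + 1) * x ^ t := by
      rw [sum_range_succ, stirlingFirst_eq_zero_of_lt (by omega), zero_mul, add_zero]
    have hright : ∑ t ∈ range (m + 2), stirlingFirst (m + 1) t * x ^ t =
        x * ∑ t ∈ range (m + 1), stirlingFirst (m + 1) (t + 1) * x ^ t := by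
      rw [sum_range_succ', stirlingFirst_succ_zero, zero_mul, add_zero, mul_sum]
      exact sum_congr rfl fun t _ => by ring
    rw [hsplit, hleft, hright, ih, ascFactorial_succ]
    ring

theorem sum_stirlingFirst_succ_succ (m : ℕ) :
    ∑ t ∈ range (m + 1), stirlingFirst (m + 1) (t + 1) = (m + 1)! := by
  have h := factorial_mul_ascFactorial 1 m
  rw [factorial_one, one_mul, add_comm 1 m, ← sum_stirlingFirst_succ_succ_mul_pow] at h
  simpa using h

end Nat

theorem catalan_mul_factorial_succ (n : ℕ) : catalan n * (n + 1)! = (n + 1).ascFactorial n := by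
  apply Nat.eq_of_mul_eq_mul_left n.factorial_pos
  have hcentral : (n + n)! = (n + 1) * catalan n * n ! * n ! := by
    rw [succ_mul_catalan_eq_centralBinom, Nat.centralBinom, two_mul,
      Nat.add_choose_mul_factorial_mul_factorial]
  rw [Nat.factorial_mul_ascFactorial, hcentral, Nat.factorial_succ]
  ring

theorem stmt_14_general (p : ℕ) :
    (catalan p : ℚ) =
      (∑ t ∈ Finset.Icc 1 (p + 1), (p : ℚ) ^ (t - 1) * (stirling (p + 1) t : ℚ)) /
        (∑ t ∈ Finset.Icc 1 (p + 1), (stirling (p + 1) t : ℚ)) := by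
  have reindex (f : ℕ → ℚ) : ∑ t ∈ Icc 1 (p + 1), f t = ∑ t ∈ range (p + 1), f (t + 1) := by
    rw [range_eq_Ico, sum_Ico_add', Ico_add_one_right_eq_Icc]
  have hnum : ∑ t ∈ Icc 1 (p + 1), (p : ℚ) ^ (t - 1) * (stirling (p + 1) t : ℚ) =
      ((p + 1).ascFactorial p : ℚ) := by
    rw [reindex, ← Nat.sum_stirlingFirst_succ_succ_mul_pow]
    push_cast
    simp [stirling_eq_stirlingFirst_s14, mul_comm]
  have hden : ∑ t ∈ Icc 1 (p + 1), (stirling (p + 1) t : ℚ) = ((p + 1)! : ℚ) := by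
    rw [reindex, ← Nat.sum_stirlingFirst_succ_succ]
    push_cast
    simp [stirling_eq_stirlingFirst_s14]
  rw [hnum, hden, eq_div_iff (by positivity), ← catalan_mul_factorial_succ]
  norm_cast

theorem stmt_14 (p : ℕ) (hp : 1 ≤ p) :
    (catalan p : ℚ) =
      (∑ t ∈ Finset.Icc 1 (p + 1), (p : ℚ) ^ (t - 1) * (stirling (p + 1) t : ℚ)) /
        (∑ t ∈ Finset.Icc 1 (p + 1), (stirling (p + 1) t : ℚ)) :=
  stmt_14_general p
end
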